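/- arXiv:2101.08628 — 12 statements merged into one kernel-verified Lean document; each statement's English description precedes it below -/
import Mathlib

section
/- Let x : Fin N → ℝ² (N ≥ 1) be data points and v¹, v² ∈ ℝ² linearly independent, with C := {z : ⟪v¹,z⟫ ≥ 0 ∧ ⟪v²,z⟫ ≥ 0} and B⁺ := segment [v¹, v²]. If y, z ∈ ℝ² satisfy z − y ∈ C, then cdepth(y) ≤ cdepth(z), where cdepth(u) := min over w ∈ B⁺ of depth_w(u). -/
open scoped RealInnerProductSpace

abbrev E2 := EuclideanSpace ℝ (Fin 2)

/-- The empirical `w`-location depth of `z` with respect to the data points `x`. -/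
noncomputable def wdepth {N : ℕ} (x : Fin N → E2) (w z : E2) : ℕ :=
  {i : Fin N | ⟪w, x i⟫ ≤ ⟪w, z⟫}.ncard

/-- The cone location depth: the minimum of the `w`-location depths over `w` in the
base `B⁺ = segment [v¹, v²]` of the dual cone. -/
noncomputable def cdepth {N : ℕ} (x : Fin N → E2) (v1 v2 : E2) (z : E2) : ℕ :=
  sInf ((fun w => wdepth x w z) '' segment ℝ v1 v2)

theorem stmt1 {N : ℕ} (hN : 1 ≤ N) (x : Fin N → E2) (v1 v2 : E2)
    (hv : LinearIndependent ℝ ![v1, v2]) (y z : E2)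
    (h : z - y ∈ {u : E2 | 0 ≤ ⟪v1, u⟫ ∧ 0 ≤ ⟪v2, u⟫}) :
    cdepth x v1 v2 y ≤ cdepth x v1 v2 z := by
  obtain ⟨h1, h2⟩ := h
  have key : ∀ w ∈ segment ℝ v1 v2, wdepth x w y ≤ wdepth x w z := by
    intro w hw
    obtain ⟨a, b, ha, hb, hab, rfl⟩ := hw
    have hw0 : (0:ℝ) ≤ ⟪a • v1 + b • v2, z - y⟫ := by
      rw [inner_add_left, real_inner_smul_left, real_inner_smul_left]
      positivity
    have hyz : ⟪a • v1 + b • v2, y⟫ ≤ ⟪a • v1 + b • v2, z⟫ := by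
      have := hw0
      rw [inner_sub_right] at this
      linarith
    apply Set.ncard_le_ncard
    · intro i hi
      exact le_trans hi hyz
    · exact Set.toFinite _
  -- the image for z is nonempty, so its sInf is attained
  have hne : ((fun w => wdepth x w z) '' segment ℝ v1 v2).Nonempty :=
    ⟨wdepth x v1 z, ⟨v1, left_mem_segment ℝ v1 v2, rfl⟩⟩
  obtain ⟨w, hw, hwz⟩ := Nat.sInf_mem hne
  calc cdepth x v1 v2 y ≤ wdepth x w y := Nat.sInf_le ⟨w, hw, rfl⟩
    _ ≤ wdepth x w z := key w hw
    _ = cdepth x v1 v2 z := hwz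
end

section
/- Let x : Fin N → ℝ² (N ≥ 1) be data points, v¹, v² ∈ ℝ² linearly independent with B⁺ := segment [v¹, v²], and p ∈ (0,1). Then the empirical lower C-quantile equals the intersection of the scalarized quantile halfspaces: Q⁻_C(p) = ⋂_{w ∈ B⁺} {z ∈ ℝ² : ⟪w, z⟫ ≥ q⁻_w(p)}. -/
open scoped RealInnerProductSpace

/-- The empirical lower quantile of the scalarized (univariate) data `⟪w, x ·⟫` at level `K`. -/
noncomputable def scalarQuantile {N : ℕ} (x : Fin N → E2) (w : E2) (K : ℕ) : ℝ :=
  sInf {r : ℝ | ∃ j : Fin N, K ≤ {i : Fin N | ⟪w, x i⟫ ≤ ⟪w, x j⟫}.ncard ∧ r = ⟪w, x j⟫}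

lemma wdepth_iff_quantile {N : ℕ} (x : Fin N → E2) (w z : E2) (K : ℕ)
    (hK1 : 1 ≤ K) (hKN : K ≤ N) :
    K ≤ wdepth x w z ↔ scalarQuantile x w K ≤ ⟪w, z⟫ := by
  have hNpos : 0 < N := lt_of_lt_of_le hK1 hKN
  have hne : Nonempty (Fin N) := ⟨⟨0, hNpos⟩⟩
  set Q : Set ℝ := {r : ℝ | ∃ j : Fin N,
    K ≤ {i : Fin N | ⟪w, x i⟫ ≤ ⟪w, x j⟫}.ncard ∧ r = ⟪w, x j⟫} with hQ
  have hQsub : Q ⊆ Set.range (fun j : Fin N => ⟪w, x j⟫) := by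
    rintro r ⟨j, -, rfl⟩; exact ⟨j, rfl⟩
  have hQfin : Q.Finite := (Set.finite_range _).subset hQsub
  have hQne : Q.Nonempty := by
    obtain ⟨j, hj⟩ := Finite.exists_max (fun j : Fin N => ⟪w, x j⟫)
    refine ⟨⟪w, x j⟫, j, ?_, rfl⟩
    have huniv : {i : Fin N | ⟪w, x i⟫ ≤ ⟪w, x j⟫} = Set.univ := by
      ext i; simpa using hj i
    rw [huniv, Set.ncard_univ]
    simpa using hKN
  have hsQ : scalarQuantile x w K = sInf Q := rfl
  constructor
  · intro h
    have hSfin : {i : Fin N | ⟪w, x i⟫ ≤ ⟪w, z⟫}.Finite := Set.toFinite _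
    have hSne : {i : Fin N | ⟪w, x i⟫ ≤ ⟪w, z⟫}.Nonempty :=
      (Set.ncard_pos hSfin).mp (lt_of_lt_of_le hK1 h)
    obtain ⟨j, hjmem, hjmax⟩ :=
      Set.exists_max_image {i : Fin N | ⟪w, x i⟫ ≤ ⟪w, z⟫} (fun i => ⟪w, x i⟫) hSfin hSne
    have hmem : ⟪w, x j⟫ ∈ Q := by
      refine ⟨j, le_trans h (Set.ncard_le_ncard ?_ (Set.toFinite _)), rfl⟩
      intro i hi; exact hjmax i hi
    calc scalarQuantile x w K ≤ ⟪w, x j⟫ := hsQ ▸ csInf_le hQfin.bddBelow hmem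
      _ ≤ ⟪w, z⟫ := hjmem
  · intro h
    obtain ⟨j, hj, hje⟩ := hQne.csInf_mem hQfin
    refine le_trans hj (Set.ncard_le_ncard ?_ (Set.toFinite _))
    intro i hi
    have : scalarQuantile x w K = ⟪w, x j⟫ := hsQ ▸ hje
    exact le_trans hi (this ▸ h)

theorem stmt3 {N : ℕ} (hN : 1 ≤ N) (x : Fin N → E2) (v1 v2 : E2)
    (hv : LinearIndependent ℝ ![v1, v2]) (p : ℝ) (hp : p ∈ Set.Ioo (0 : ℝ) 1) :
    {z : E2 | ⌈(N : ℝ) * p⌉₊ ≤ cdepth x v1 v2 z}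
      = ⋂ w ∈ segment ℝ v1 v2, {z : E2 | scalarQuantile x w ⌈(N : ℝ) * p⌉₊ ≤ ⟪w, z⟫} := by
  obtain ⟨hp0, hp1⟩ := hp
  set K := ⌈(N : ℝ) * p⌉₊ with hK
  have hK1 : 1 ≤ K := Nat.one_le_ceil_iff.mpr (by positivity)
  have hKN : K ≤ N := by
    rw [hK, Nat.ceil_le]
    calc (N : ℝ) * p ≤ (N : ℝ) * 1 := by
          exact mul_le_mul_of_nonneg_left hp1.le (Nat.cast_nonneg N)
      _ = N := mul_one _
  ext z
  have himg : ((fun w => wdepth x w z) '' segment ℝ v1 v2).Nonempty :=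
    ⟨_, Set.mem_image_of_mem _ (left_mem_segment ℝ v1 v2)⟩
  simp only [Set.mem_setOf_eq, Set.mem_iInter]
  rw [cdepth, le_csInf_iff (OrderBot.bddBelow _) himg]
  simp only [Set.forall_mem_image]
  exact forall₂_congr (fun w hw => wdepth_iff_quantile x w z K hK1 hKN)
end

section
/- Let x : Fin N → ℝ² (N ≥ 1) be data points, w ∈ ℝ² with w ≠ 0, and p ∈ (0,1]. If Q⁻_w(p) is neither the empty set nor all of ℝ², then there exists an index j ∈ Fin N such that Q⁻_w(p) = x j + H⁺(w) = {z ∈ ℝ² : ⟪w, z − x j⟫ ≥ 0}; that is, at least one data point lies on the boundary of the quantile halfspace. -/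
open scoped RealInnerProductSpace

theorem stmt4 {N : ℕ} (hN : 1 ≤ N) (x : Fin N → E2) (w : E2) (hw : w ≠ 0)
    (p : ℝ) (hp : p ∈ Set.Ioc (0 : ℝ) 1)
    (hne : {z : E2 | ⌈(N : ℝ) * p⌉₊ ≤ wdepth x w z} ≠ ∅)
    (hnu : {z : E2 | ⌈(N : ℝ) * p⌉₊ ≤ wdepth x w z} ≠ Set.univ) :
    ∃ j : Fin N,
      {z : E2 | ⌈(N : ℝ) * p⌉₊ ≤ wdepth x w z} = {z : E2 | 0 ≤ ⟪w, z - x j⟫} := by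
  classical
  set K : ℕ := ⌈(N : ℝ) * p⌉₊ with hKdef
  set v : Fin N → ℝ := fun i => ⟪w, x i⟫ with hv
  set d : ℝ → ℕ := fun t => {i : Fin N | v i ≤ t}.ncard with hd
  have hwd : ∀ z : E2, wdepth x w z = d ⟪w, z⟫ := fun z => rfl
  have hK1 : 1 ≤ K := by
    have : (0 : ℝ) < (N : ℝ) * p := by
      have hN' : (0 : ℝ) < N := by exact_mod_cast hN
      exact mul_pos hN' hp.1
    exact Nat.ceil_pos.mpr this
  have hKN : K ≤ N := by
    rw [hKdef, Nat.ceil_le]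
    calc (N : ℝ) * p ≤ (N : ℝ) * 1 := by
          apply mul_le_mul_of_nonneg_left hp.2 (by positivity)
      _ = N := mul_one _
  have hmono : ∀ s t : ℝ, s ≤ t → d s ≤ d t := by
    intro s t hst
    apply Set.ncard_le_ncard _ (Set.toFinite _)
    intro i hi
    exact le_trans hi hst
  haveI : Nonempty (Fin N) := ⟨⟨0, hN⟩⟩
  -- T : indices i with K ≤ d (v i)
  set T : Finset (Fin N) := Finset.univ.filter (fun i => K ≤ d (v i)) with hT
  have hTne : T.Nonempty := by
    obtain ⟨im, _, him⟩ := Finset.exists_max_image Finset.univ v ⟨Classical.arbitrary _, Finset.mem_univ _⟩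
    refine ⟨im, Finset.mem_filter.mpr ⟨Finset.mem_univ _, ?_⟩⟩
    have : {i : Fin N | v i ≤ v im} = Set.univ := by
      ext i; simp [him i (Finset.mem_univ i)]
    have : d (v im) = N := by
      rw [hd]; simp only [this, Set.ncard_univ]; simp
    omega
  obtain ⟨j, hjT, hjmin⟩ := Finset.exists_min_image T v hTne
  have hjK : K ≤ d (v j) := (Finset.mem_filter.mp hjT).2
  refine ⟨j, ?_⟩
  ext z
  simp only [Set.mem_setOf_eq, hwd, inner_sub_right, sub_nonneg]
  constructor
  · intro hKz
    -- the set {i | v i ≤ ⟪w,z⟫} is nonempty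
    have hpos : 0 < ({i : Fin N | v i ≤ ⟪w, z⟫}).ncard := lt_of_lt_of_le hK1 hKz
    have hne' : ({i : Fin N | v i ≤ ⟪w, z⟫}).Nonempty := by
      rw [Set.nonempty_iff_ne_empty]
      intro h
      rw [h, Set.ncard_empty] at hpos
      omega
    set S : Finset (Fin N) := Finset.univ.filter (fun i => v i ≤ ⟪w, z⟫) with hS
    have hSne : S.Nonempty := by
      obtain ⟨i, hi⟩ := hne'
      exact ⟨i, Finset.mem_filter.mpr ⟨Finset.mem_univ _, hi⟩⟩
    obtain ⟨i0, hi0S, hi0max⟩ := Finset.exists_max_image S v hSne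
    have hi0t : v i0 ≤ ⟪w, z⟫ := (Finset.mem_filter.mp hi0S).2
    have hsub : {i : Fin N | v i ≤ ⟪w, z⟫} ⊆ {i : Fin N | v i ≤ v i0} := by
      intro i hi
      exact hi0max i (Finset.mem_filter.mpr ⟨Finset.mem_univ _, hi⟩)
    have : K ≤ d (v i0) := le_trans hKz (Set.ncard_le_ncard hsub (Set.toFinite _))
    have hi0T : i0 ∈ T := Finset.mem_filter.mpr ⟨Finset.mem_univ _, this⟩
    exact le_trans (hjmin i0 hi0T) hi0t
  · intro hjz
    exact le_trans hjK (hmono _ _ hjz)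
end

section
/- Let x : Fin N → ℝ² (N ≥ 1) be data points, w ∈ ℝ² with w ≠ 0, p ∈ (0,1), and j ∈ Fin N. Then Q⁻_w(p) = x j + H⁺(w) holds if and only if q⁻_w(p) = ⟪w, x j⟫. -/
open scoped RealInnerProductSpace

theorem stmt6 {N : ℕ} (hN : 1 ≤ N) (x : Fin N → E2) (w : E2) (hw : w ≠ 0)
    (p : ℝ) (hp : p ∈ Set.Ioo (0 : ℝ) 1) (j : Fin N) :
    {z : E2 | ⌈(N : ℝ) * p⌉₊ ≤ wdepth x w z} = {z : E2 | 0 ≤ ⟪w, z - x j⟫} ↔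
      scalarQuantile x w ⌈(N : ℝ) * p⌉₊ = ⟪w, x j⟫ := by
  classical
  have hNE : Nonempty (Fin N) := ⟨⟨0, hN⟩⟩
  set K := ⌈(N : ℝ) * p⌉₊ with hKdef
  set a : Fin N → ℝ := fun i => ⟪w, x i⟫ with ha
  set f : ℝ → ℕ := fun t => {i : Fin N | a i ≤ t}.ncard with hf
  have hNpos : (0:ℝ) < N := by exact_mod_cast hN
  have hK1 : 1 ≤ K := Nat.one_le_ceil_iff.mpr (mul_pos hNpos hp.1)
  have hKN : K ≤ N := Nat.ceil_le.mpr (by nlinarith [hp.2])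
  have hwn : ‖w‖ ≠ 0 := norm_ne_zero_iff.mpr hw
  have hsur : ∀ c : ℝ, ∃ z : E2, ⟪w, z⟫ = c := by
    intro c
    refine ⟨(c / ‖w‖ ^ 2) • w, ?_⟩
    rw [real_inner_smul_right, real_inner_self_eq_norm_sq]
    field_simp
  have hmono : Monotone f := fun s t hst =>
    Set.ncard_le_ncard (fun i hi => le_trans hi hst) (Set.toFinite _)
  set S : Set ℝ := {r : ℝ | ∃ j : Fin N, K ≤ f (a j) ∧ r = a j} with hS
  have hSfin : S.Finite := by
    apply (Set.finite_range a).subset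
    rintro r ⟨j', _, rfl⟩
    exact ⟨j', rfl⟩
  have hSne : S.Nonempty := by
    obtain ⟨j0, hj0⟩ := Finset.exists_max_image Finset.univ a ⟨Classical.arbitrary _, Finset.mem_univ _⟩
    refine ⟨a j0, j0, ?_, rfl⟩
    have : {i : Fin N | a i ≤ a j0} = Set.univ := by
      ext i; simpa using hj0.2 i (Finset.mem_univ i)
    simp only [hf, this, Set.ncard_univ]
    simpa using hKN
  set q : ℝ := sInf S with hq
  have hqmem : q ∈ S := hSne.csInf_mem hSfin
  have hqlb : ∀ r ∈ S, q ≤ r := fun r hr => csInf_le hSfin.bddBelow hr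
  have key : ∀ t : ℝ, K ≤ f t ↔ q ≤ t := by
    intro t
    constructor
    · intro h
      have hA : {i : Fin N | a i ≤ t}.Nonempty := by
        rw [← Set.ncard_pos (Set.toFinite _)]
        exact lt_of_lt_of_le hK1 h
      obtain ⟨b, hb, hbmax⟩ := Finset.exists_max_image (Set.toFinite _).toFinset a
        (by simpa [Set.Finite.toFinset_nonempty] using hA)
      have hbmem : a b ∈ S := by
        refine ⟨b, le_trans h ?_, rfl⟩
        refine Set.ncard_le_ncard (fun i hi => ?_) (Set.toFinite _)
        exact hbmax i (by simpa using hi)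
      have hbt : a b ≤ t := by simpa using hb
      exact le_trans (hqlb _ hbmem) hbt
    · intro h
      obtain ⟨j0, hj0, hqj0⟩ := hqmem
      calc K ≤ f (a j0) := hj0
        _ = f q := by rw [hqj0]
        _ ≤ f t := hmono h
  have hscal : scalarQuantile x w K = q := rfl
  have hlhs : {z : E2 | K ≤ wdepth x w z} = {z : E2 | q ≤ ⟪w, z⟫} := by
    ext z
    exact key ⟪w, z⟫
  have hrhs : {z : E2 | 0 ≤ ⟪w, z - x j⟫} = {z : E2 | a j ≤ ⟪w, z⟫} := by
    ext z
    simp only [Set.mem_setOf_eq, inner_sub_right, sub_nonneg, ha]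
  rw [hscal, hlhs, hrhs]
  constructor
  · intro hset
    obtain ⟨z1, hz1⟩ := hsur q
    obtain ⟨z2, hz2⟩ := hsur (a j)
    have h1 : a j ≤ q := by
      have hmem : z1 ∈ {z : E2 | q ≤ ⟪w, z⟫} := le_of_eq hz1.symm
      rw [hset] at hmem
      exact le_of_le_of_eq hmem hz1
    have h2 : q ≤ a j := by
      have hmem : z2 ∈ {z : E2 | a j ≤ ⟪w, z⟫} := le_of_eq hz2.symm
      rw [← hset] at hmem
      exact le_of_le_of_eq hmem hz2
    exact le_antisymm h2 h1
  · intro h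
    rw [h]
end

section
/- Let x : Fin N → ℝ² (N ≥ 1) be data points, v¹, v² ∈ ℝ² linearly independent with B⁺ := segment [v¹, v²], and p ∈ (0,1]. If Q⁻_C(p) is neither empty nor all of ℝ², then there exists a FINITE set W ⊆ B⁺ containing v¹ and v² such that Q⁻_C(p) = ⋂_{w ∈ W} Q⁻_w(p), and every w ∈ W with w ≠ v¹ and w ≠ v² satisfies: #{i ∈ Fin N : ⟪w, x i⟫ = q⁻_w(p)} ≥ 2 (at least two data points on the boundary of Q⁻_w(p)) and #{i ∈ Fin N : ⟪w, x i⟫ ≤ q⁻_w(p)} ≥ ⌈N·p⌉ + 1. -/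
open scoped RealInnerProductSpace

/-!
Parametrize `B⁺` by `w = lineMap v1 v2 s`, `s ∈ [0, 1]`. Each data point and each `z` then give
affine functions of `s`, and `z` has `w`-depth at least `K` iff the `K`-th smallest data line lies
below the line of `z`. This quantile curve is continuous, and between consecutive crossings of data
lines it follows a single data line. If `z` has depth at least `K` at `v1` and `v2` but not on all
of `B⁺`, the rightmost maximum `c` of the gap between the quantile and the line of `z` is interior,
and there the quantile switches from a data line rising at least as fast as the line of `z` to one
rising strictly slower. These two lines tie at the quantile, and together with the `K` lines below
the second one they put `K + 1` data points weakly below it. So `W` consists of `v1`, `v2` and the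
finitely many crossing directions with these two properties.
-/

open Set Topology

section OrderStatistic

variable {ι : Type*} [Finite ι] {K : ℕ}

/-- Written like `scalarQuantile`, so that `scalarQuantile x w K = orderStat (⟪w, x ·⟫) K`
holds by definition. -/
noncomputable def orderStat (g : ι → ℝ) (K : ℕ) : ℝ :=
  sInf {r : ℝ | ∃ j : ι, K ≤ {i : ι | g i ≤ g j}.ncard ∧ r = g j}

theorem finite_orderStat_candidates (g : ι → ℝ) (K : ℕ) :
    {r : ℝ | ∃ j : ι, K ≤ {i : ι | g i ≤ g j}.ncard ∧ r = g j}.Finite :=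
  (finite_range g).subset fun _ ⟨j, _, hr⟩ => ⟨j, hr.symm⟩

theorem orderStat_le_of_le_ncard (g : ι → ℝ) {j : ι} (hj : K ≤ {i : ι | g i ≤ g j}.ncard) :
    orderStat g K ≤ g j :=
  csInf_le (finite_orderStat_candidates g K).bddBelow ⟨j, hj, rfl⟩

theorem exists_orderStat_eq [Nonempty ι] (g : ι → ℝ) (hK : K ≤ Nat.card ι) :
    ∃ j, K ≤ {i : ι | g i ≤ g j}.ncard ∧ orderStat g K = g j := by
  obtain ⟨jmax, hjmax⟩ := Finite.exists_max g
  have hrank : K ≤ {i : ι | g i ≤ g jmax}.ncard := by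
    simpa [hjmax] using hK
  exact Set.Nonempty.csInf_mem (by exact ⟨g jmax, jmax, hrank, rfl⟩)
    (finite_orderStat_candidates g K)

theorem orderStat_le_iff (hK1 : 1 ≤ K) (hK : K ≤ Nat.card ι) (g : ι → ℝ) (t : ℝ) :
    orderStat g K ≤ t ↔ K ≤ {i : ι | g i ≤ t}.ncard := by
  have : Nonempty ι := Nat.card_pos_iff.1 (by omega) |>.1
  constructor
  · intro h
    obtain ⟨j, hj, hq⟩ := exists_orderStat_eq g hK
    exact hj.trans (ncard_le_ncard (fun i (hi : g i ≤ g j) => hi.trans (hq ▸ h)) (toFinite _))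
  · intro h
    obtain ⟨j, hj, hmax⟩ := exists_max_image {i | g i ≤ t} g (toFinite _)
      (nonempty_of_ncard_ne_zero (by omega))
    exact (orderStat_le_of_le_ncard g (h.trans (ncard_le_ncard hmax (toFinite _)))).trans hj

theorem orderStat_le_add (hK1 : 1 ≤ K) (hK : K ≤ Nat.card ι) {g g' : ι → ℝ} {ε : ℝ}
    (h : ∀ i, g i ≤ g' i + ε) : orderStat g K ≤ orderStat g' K + ε := by
  rw [orderStat_le_iff hK1 hK]
  refine ((orderStat_le_iff hK1 hK g' _).1 le_rfl).trans
    (ncard_le_ncard (fun i hi => ?_) (toFinite _))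
  exact (h i).trans (add_le_add_left hi ε)

end OrderStatistic

theorem Set.Finite.exists_Ioo_disjoint_right {α : Type*} [TopologicalSpace α] [LinearOrder α]
    [OrderTopology α] {C : Set α} (hC : C.Finite) {c v : α} (hcv : c < v) :
    ∃ v' ∈ Ioc c v, Disjoint (Ioo c v') C := by
  have hnhds : (C \ {c})ᶜ ∈ 𝓝[>] c :=
    mem_nhdsWithin_of_mem_nhds ((hC.sdiff).isClosed.isOpen_compl.mem_nhds (by simp))
  obtain ⟨v', hv', hsub⟩ := (mem_nhdsGT_iff_exists_mem_Ioc_Ioo_subset hcv).1 hnhds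
  exact ⟨v', hv', disjoint_left.2 fun s hs hsC => hsub hs ⟨hsC, hs.1.ne'⟩⟩

theorem Set.Finite.exists_Ioo_disjoint_left {α : Type*} [TopologicalSpace α] [LinearOrder α]
    [OrderTopology α] {C : Set α} (hC : C.Finite) {u c : α} (huc : u < c) :
    ∃ u' ∈ Ico u c, Disjoint (Ioo u' c) C := by
  have hnhds : (C \ {c})ᶜ ∈ 𝓝[<] c :=
    mem_nhdsWithin_of_mem_nhds ((hC.sdiff).isClosed.isOpen_compl.mem_nhds (by simp))
  obtain ⟨u', hu', hsub⟩ := (mem_nhdsLT_iff_exists_mem_Ico_Ioo_subset huc).1 hnhds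
  exact ⟨u', hu', disjoint_left.2 fun s hs hsC => hsub hs ⟨hsC, hs.2.ne⟩⟩

theorem exists_rightmost_isMaxOn_Icc {h : ℝ → ℝ} (hh : Continuous h) {u v : ℝ} (huv : u ≤ v) :
    ∃ c ∈ Icc u v, (∀ s ∈ Icc u v, h s ≤ h c) ∧ ∀ s ∈ Ioc c v, h s < h c := by
  obtain ⟨c₀, hc₀, hmax⟩ := isCompact_Icc.exists_isMaxOn (nonempty_Icc.2 huv) hh.continuousOn
  obtain ⟨c, ⟨hc, hcc₀ : h c = h c₀⟩, hgreatest⟩ :=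
    (isCompact_Icc.inter_right (isClosed_eq hh continuous_const)).exists_isGreatest
      ⟨c₀, hc₀, rfl⟩
  have hle : ∀ s ∈ Icc u v, h s ≤ h c := fun s hs => hcc₀ ▸ isMaxOn_iff.1 hmax s hs
  refine ⟨c, hc, hle, fun s hs => (hle s ⟨hc.1.trans hs.1.le, hs.2⟩).lt_of_ne fun hsc => ?_⟩
  exact hs.1.not_ge (hgreatest ⟨⟨hc.1.trans hs.1.le, hs.2⟩, hsc.trans hcc₀⟩)

section Lines

variable {ι : Type*} {K : ℕ} (a b : ι → ℝ)

def crossings : Set ℝ :=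
  {s | ∃ i j, b i ≠ b j ∧ a i + s * b i = a j + s * b j}

noncomputable def lineQuantile (K : ℕ) (s : ℝ) : ℝ :=
  orderStat (fun i => a i + s * b i) K

variable {a b}

theorem crossings_finite [Finite ι] : (crossings a b).Finite := by
  refine (finite_range fun p : ι × ι => (a p.2 - a p.1) / (b p.1 - b p.2)).subset ?_
  rintro s ⟨i, j, hb, hs⟩
  refine ⟨(i, j), ?_⟩
  rw [div_eq_iff (sub_ne_zero.2 hb)]
  linear_combination -hs

theorem le_of_le_of_disjoint_crossings {I : Set ℝ} (hI : I.OrdConnected)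
    (hIC : Disjoint I (crossings a b)) {i j : ι} {s s' : ℝ} (hs : s ∈ I) (hs' : s' ∈ I)
    (h : a i + s * b i ≤ a j + s * b j) : a i + s' * b i ≤ a j + s' * b j := by
  by_contra! h'
  by_cases hb : b i = b j
  · rw [hb] at h h'
    linarith
  obtain ⟨r, hr, hr0⟩ := intermediate_value_uIcc (a := s) (b := s')
    (f := fun r => a i + r * b i - (a j + r * b j)) (by fun_prop)
    (mem_uIcc.2 (Or.inl ⟨by linarith, by linarith⟩) : (0 : ℝ) ∈ _)
  exact disjoint_left.1 hIC (hI.uIcc_subset hs hs' hr) ⟨i, j, hb, by linarith [hr0]⟩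

theorem lineQuantile_le_iff [Finite ι] (hK1 : 1 ≤ K) (hK : K ≤ Nat.card ι) (s t : ℝ) :
    lineQuantile a b K s ≤ t ↔ K ≤ {i | a i + s * b i ≤ t}.ncard :=
  orderStat_le_iff hK1 hK _ t

theorem continuous_lineQuantile [Finite ι] (hK1 : 1 ≤ K) (hK : K ≤ Nat.card ι) :
    Continuous (lineQuantile a b K) := by
  obtain ⟨M, hM⟩ := (finite_range fun i => |b i|).bddAbove
  refine (LipschitzWith.of_le_add_mul' M fun s s' => orderStat_le_add hK1 hK fun i => ?_).continuous
  have : (s - s') * b i ≤ M * dist s s' :=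
    calc (s - s') * b i ≤ |s - s'| * |b i| := (le_abs_self _).trans (abs_mul _ _).le
      _ ≤ |s - s'| * M := mul_le_mul_of_nonneg_left (hM ⟨i, rfl⟩) (abs_nonneg _)
      _ = M * dist s s' := by rw [Real.dist_eq, mul_comm]
  linarith

theorem exists_eqOn_lineQuantile [Finite ι] (hK1 : 1 ≤ K) (hK : K ≤ Nat.card ι) {u v : ℝ}
    (huv : u < v) (hI : Disjoint (Ioo u v) (crossings a b)) :
    ∃ j, EqOn (lineQuantile a b K) (fun s => a j + s * b j) (Icc u v) := by
  have : Nonempty ι := Nat.card_pos_iff.1 (by omega) |>.1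
  obtain ⟨m, hm⟩ := nonempty_Ioo.2 huv
  have hprop := @le_of_le_of_disjoint_crossings _ a b _ ordConnected_Ioo hI
  have hiff : ∀ s ∈ Ioo u v, ∀ j, lineQuantile a b K s ≤ a j + s * b j ↔
      lineQuantile a b K m ≤ a j + m * b j := by
    intro s hs j
    simp only [lineQuantile_le_iff hK1 hK]
    rw [show {i | a i + s * b i ≤ a j + s * b j} = {i | a i + m * b i ≤ a j + m * b j} from
      ext fun i => ⟨hprop hs hm, hprop hm hs⟩]
  obtain ⟨j₀, -, hq₀⟩ := exists_orderStat_eq (fun i => a i + m * b i) hK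
  refine ⟨j₀, ?_⟩
  rw [← closure_Ioo huv.ne]
  refine EqOn.closure (fun s hs => le_antisymm ((hiff s hs j₀).2 hq₀.le) ?_)
    (continuous_lineQuantile hK1 hK) (by fun_prop)
  obtain ⟨j₁, -, hq₁⟩ := exists_orderStat_eq (fun i => a i + s * b i) hK
  have hm₁ : a j₀ + m * b j₀ ≤ a j₁ + m * b j₁ := hq₀ ▸ (hiff s hs j₁).1 hq₁.le
  exact (hprop hm hs hm₁).trans_eq hq₁.symm

/-- The `K` lines weakly below `jR` just right of `c` stay weakly below the quantile at `c`, and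
the steeper line `jL` is not among them. -/
theorem succ_le_ncard_le_lineQuantile [Finite ι] (hK1 : 1 ≤ K) (hK : K ≤ Nat.card ι) {c v : ℝ}
    (hcv : c < v) (hI : Disjoint (Ioo c v) (crossings a b)) {jL jR : ι}
    (hR : EqOn (lineQuantile a b K) (fun s => a jR + s * b jR) (Icc c v))
    (hL : a jL + c * b jL = a jR + c * b jR) (hb : b jR < b jL) :
    K + 1 ≤ {i | a i + c * b i ≤ lineQuantile a b K c}.ncard := by
  obtain ⟨s, hs⟩ := nonempty_Ioo.2 hcv
  set below := {i | a i + s * b i ≤ a jR + s * b jR}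
  have hbelow : K ≤ below.ncard :=
    (lineQuantile_le_iff hK1 hK s _).1 (hR (Ioo_subset_Icc_self hs)).le
  have hjL : jL ∉ below := by
    have : 0 < (s - c) * (b jL - b jR) := mul_pos (by linarith [hs.1]) (by linarith)
    simp only [below, mem_ofPred_eq, not_le]
    linarith
  have hsub : insert jL below ⊆ {i | a i + c * b i ≤ lineQuantile a b K c} := by
    rw [hR (left_mem_Icc.2 hcv.le)]
    refine insert_subset hL.le fun i hi => ?_
    have hIoo : Ioo c v ⊆ {r | a i + r * b i ≤ a jR + r * b jR} := fun r hr =>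
      le_of_le_of_disjoint_crossings ordConnected_Ioo hI hs hr hi
    have := closure_minimal hIoo (isClosed_le (by fun_prop) (by fun_prop))
    rw [closure_Ioo hcv.ne] at this
    exact this (left_mem_Icc.2 hcv.le)
  calc K + 1 ≤ (insert jL below).ncard := by rw [ncard_insert_of_notMem hjL (toFinite _)]; omega
    _ ≤ _ := ncard_le_ncard hsub (toFinite _)

theorem exists_crossing_lineQuantile_gt [Finite ι] (hK1 : 1 ≤ K) (hK : K ≤ Nat.card ι)
    {α β s₀ : ℝ} (h0 : lineQuantile a b K 0 ≤ α) (h1 : lineQuantile a b K 1 ≤ α + β)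
    (hs₀ : s₀ ∈ Icc 0 1) (hlt : α + s₀ * β < lineQuantile a b K s₀) :
    ∃ c ∈ Ioo 0 1 ∩ crossings a b, α + c * β < lineQuantile a b K c ∧
      2 ≤ {i | a i + c * b i = lineQuantile a b K c}.ncard ∧
      K + 1 ≤ {i | a i + c * b i ≤ lineQuantile a b K c}.ncard := by
  set q := lineQuantile a b K
  obtain ⟨c, hc, hmax, hstrict⟩ := exists_rightmost_isMaxOn_Icc (h := fun s => q s - (α + s * β))
    ((continuous_lineQuantile hK1 hK).sub (by fun_prop)) zero_le_one
  have hpos : α + c * β < q c := by linarith [hmax s₀ hs₀]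
  have hcI : c ∈ Ioo 0 1 :=
    ⟨hc.1.lt_of_ne (by rintro rfl; linarith), hc.2.lt_of_ne (by rintro rfl; linarith)⟩
  obtain ⟨u, hu, huC⟩ := (crossings_finite (a := a) (b := b)).exists_Ioo_disjoint_left hcI.1
  obtain ⟨v, hv, hvC⟩ := (crossings_finite (a := a) (b := b)).exists_Ioo_disjoint_right hcI.2
  obtain ⟨jL, hjL⟩ := exists_eqOn_lineQuantile hK1 hK hu.2 huC
  obtain ⟨jR, hjR⟩ := exists_eqOn_lineQuantile hK1 hK hv.1 hvC
  have hqcL : q c = a jL + c * b jL := hjL (right_mem_Icc.2 hu.2.le)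
  have hqcR : q c = a jR + c * b jR := hjR (left_mem_Icc.2 hv.1.le)
  -- the gap `q - (α + s * β)` does not decrease on `[u, c]` and strictly decreases on `[c, v]`
  have hbL : β ≤ b jL := by
    have hqu : q u = a jL + u * b jL := hjL (left_mem_Icc.2 hu.2.le)
    have := hmax u ⟨hu.1, hu.2.le.trans hc.2⟩
    rw [hqu, hqcL] at this
    nlinarith [hu.2]
  have hbR : b jR < β := by
    have hqv : q v = a jR + v * b jR := hjR (right_mem_Icc.2 hv.1.le)
    have := hstrict v hv
    rw [hqv, hqcR] at this
    nlinarith [hv.1]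
  have hb : b jR < b jL := hbR.trans_le hbL
  have hties : {jL, jR} ⊆ {i | a i + c * b i = q c} :=
    insert_subset hqcL.symm (singleton_subset_iff.2 hqcR.symm)
  refine ⟨c, ⟨hcI, jR, jL, hb.ne, hqcR.symm.trans hqcL⟩, hpos, ?_,
    succ_le_ncard_le_lineQuantile hK1 hK hv.1 hvC hjR (hqcL.symm.trans hqcR) hb⟩
  exact (ncard_pair fun h => hb.ne (congrArg b h).symm).symm.le.trans
    (ncard_le_ncard hties (toFinite _))

end Lines

open AffineMap

theorem inner_lineMap {F : Type*} [NormedAddCommGroup F] [InnerProductSpace ℝ F] (v1 v2 y : F)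
    (s : ℝ) : ⟪lineMap v1 v2 s, y⟫ = ⟪v1, y⟫ + s * (⟪v2, y⟫ - ⟪v1, y⟫) := by
  rw [lineMap_apply_module, inner_add_left, real_inner_smul_left, real_inner_smul_left]
  ring

section Cone

variable {N : ℕ} (x : Fin N → E2) (v1 v2 : E2) {K : ℕ}

theorem le_cdepth_iff (z : E2) :
    K ≤ cdepth x v1 v2 z ↔ ∀ w ∈ segment ℝ v1 v2, K ≤ wdepth x w z := by
  rw [cdepth, le_csInf_iff' ((nonempty_of_mem (left_mem_segment ℝ v1 v2)).image _),
    mem_lowerBounds, forall_mem_image]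

theorem le_wdepth_lineMap_iff (hK1 : 1 ≤ K) (hK : K ≤ N) (z : E2) (s : ℝ) :
    K ≤ wdepth x (lineMap v1 v2 s) z ↔
      lineQuantile (fun i => ⟪v1, x i⟫) (fun i => ⟪v2, x i⟫ - ⟪v1, x i⟫) K s ≤
        ⟪v1, z⟫ + s * (⟪v2, z⟫ - ⟪v1, z⟫) := by
  rw [lineQuantile_le_iff hK1 (by simpa using hK)]
  simp only [wdepth, inner_lineMap]

theorem scalarQuantile_lineMap (s : ℝ) :
    scalarQuantile x (lineMap v1 v2 s) K =
      lineQuantile (fun i => ⟪v1, x i⟫) (fun i => ⟪v2, x i⟫ - ⟪v1, x i⟫) K s := by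
  simp only [scalarQuantile, lineQuantile, orderStat, inner_lineMap]

def boundaryDirections (K : ℕ) : Set E2 :=
  {w ∈ lineMap v1 v2 ''
      (Ioo 0 1 ∩ crossings (fun i => ⟪v1, x i⟫) (fun i => ⟪v2, x i⟫ - ⟪v1, x i⟫)) |
    2 ≤ {i | ⟪w, x i⟫ = scalarQuantile x w K}.ncard ∧
      K + 1 ≤ {i | ⟪w, x i⟫ ≤ scalarQuantile x w K}.ncard}

theorem boundaryDirections_finite : (boundaryDirections x v1 v2 K).Finite :=
  ((crossings_finite.inter_of_right _).image _).subset (sep_subset _ _)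

theorem boundaryDirections_subset_segment : boundaryDirections x v1 v2 K ⊆ segment ℝ v1 v2 := by
  rw [segment_eq_image_lineMap]
  exact fun w hw => image_mono (inter_subset_left.trans Ioo_subset_Icc_self) hw.1

theorem le_cdepth_of_forall_le_wdepth (hK1 : 1 ≤ K) (hK : K ≤ N) {z : E2}
    (hz : ∀ w ∈ insert v1 (insert v2 (boundaryDirections x v1 v2 K)), K ≤ wdepth x w z) :
    K ≤ cdepth x v1 v2 z := by
  rw [le_cdepth_iff, segment_eq_image_lineMap]
  rintro _ ⟨s₀, hs₀, rfl⟩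
  by_contra! hlt
  rw [← not_le, le_wdepth_lineMap_iff x v1 v2 hK1 hK, not_le] at hlt
  have h0 := (le_wdepth_lineMap_iff x v1 v2 hK1 hK z 0).1 (by simpa using hz v1 (mem_insert _ _))
  have h1 := (le_wdepth_lineMap_iff x v1 v2 hK1 hK z 1).1 (by simpa using hz v2 (by simp))
  obtain ⟨c, hc, hgt, hties, hbelow⟩ := exists_crossing_lineQuantile_gt hK1 (by simpa using hK)
    (by simpa using h0) (by simpa using h1) hs₀ hlt
  have hcW : lineMap v1 v2 c ∈ boundaryDirections x v1 v2 K :=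
    ⟨⟨c, hc, rfl⟩, by simpa only [scalarQuantile_lineMap, inner_lineMap] using ⟨hties, hbelow⟩⟩
  exact hgt.not_ge ((le_wdepth_lineMap_iff x v1 v2 hK1 hK z c).1 (hz _ (by simp [hcW])))

end Cone

theorem stmt7_general {N : ℕ} (hN : 1 ≤ N) (x : Fin N → E2) (v1 v2 : E2)
    (p : ℝ) (hp : p ∈ Set.Ioc (0 : ℝ) 1) :
    ∃ W : Set E2, W.Finite ∧ W ⊆ segment ℝ v1 v2 ∧ v1 ∈ W ∧ v2 ∈ W ∧
      ({z : E2 | ⌈(N : ℝ) * p⌉₊ ≤ cdepth x v1 v2 z}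
        = ⋂ w ∈ W, {z : E2 | ⌈(N : ℝ) * p⌉₊ ≤ wdepth x w z}) ∧
      ∀ w ∈ W, w ≠ v1 → w ≠ v2 →
        2 ≤ {i : Fin N | ⟪w, x i⟫ = scalarQuantile x w ⌈(N : ℝ) * p⌉₊}.ncard ∧
        ⌈(N : ℝ) * p⌉₊ + 1 ≤ {i : Fin N | ⟪w, x i⟫ ≤ scalarQuantile x w ⌈(N : ℝ) * p⌉₊}.ncard := by
  have hK1 : 1 ≤ ⌈(N : ℝ) * p⌉₊ := Nat.one_le_ceil_iff.2 (mul_pos (by exact_mod_cast hN) hp.1)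
  have hK : ⌈(N : ℝ) * p⌉₊ ≤ N := Nat.ceil_le.2 (mul_le_of_le_one_right N.cast_nonneg hp.2)
  set W := insert v1 (insert v2 (boundaryDirections x v1 v2 ⌈(N : ℝ) * p⌉₊))
  have hW : W ⊆ segment ℝ v1 v2 :=
    insert_subset (left_mem_segment ℝ v1 v2) (insert_subset (right_mem_segment ℝ v1 v2)
      (boundaryDirections_subset_segment x v1 v2))
  refine ⟨W, ((boundaryDirections_finite x v1 v2).insert _).insert _, hW, mem_insert _ _,
    mem_insert_of_mem _ (mem_insert _ _), ?_, ?_⟩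
  · ext z
    simp only [mem_ofPred_eq, mem_iInter]
    exact ⟨fun hz w hw => (le_cdepth_iff x v1 v2 z).1 hz w (hW hw),
      le_cdepth_of_forall_le_wdepth x v1 v2 hK1 hK⟩
  · rintro w (rfl | rfl | hw) hw1 hw2
    exacts [absurd rfl hw1, absurd rfl hw2, hw.2]

theorem stmt7 {N : ℕ} (hN : 1 ≤ N) (x : Fin N → E2) (v1 v2 : E2)
    (hv : LinearIndependent ℝ ![v1, v2]) (p : ℝ) (hp : p ∈ Set.Ioc (0 : ℝ) 1)
    (hne : {z : E2 | ⌈(N : ℝ) * p⌉₊ ≤ cdepth x v1 v2 z} ≠ ∅)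
    (hnu : {z : E2 | ⌈(N : ℝ) * p⌉₊ ≤ cdepth x v1 v2 z} ≠ Set.univ) :
    ∃ W : Set E2, W.Finite ∧ W ⊆ segment ℝ v1 v2 ∧ v1 ∈ W ∧ v2 ∈ W ∧
      ({z : E2 | ⌈(N : ℝ) * p⌉₊ ≤ cdepth x v1 v2 z}
        = ⋂ w ∈ W, {z : E2 | ⌈(N : ℝ) * p⌉₊ ≤ wdepth x w z}) ∧
      ∀ w ∈ W, w ≠ v1 → w ≠ v2 →
        2 ≤ {i : Fin N | ⟪w, x i⟫ = scalarQuantile x w ⌈(N : ℝ) * p⌉₊}.ncard ∧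
        ⌈(N : ℝ) * p⌉₊ + 1 ≤ {i : Fin N | ⟪w, x i⟫ ≤ scalarQuantile x w ⌈(N : ℝ) * p⌉₊}.ncard :=
  stmt7_general hN x v1 v2 p hp
end

section
/- (Rotation lemma for quantiles, part (d).) Let x : Fin N → ℝ² (N ≥ 1) be data points, let w, v² ∈ ℝ² be linearly independent and set w(s) := (1−s)·w + s·v². Let j ∈ Fin N, S ⊆ Fin N with j ∉ S, and s̄ ∈ (0,1]. Assume: (i) for every s ∈ [0, s̄], ⟪w(s), x i⟫ ≤ ⟪w(s), x j⟫ for all i ∈ S and ⟪w(s), x i⟫ ≥ ⟪w(s), x j⟫ for all i ∉ S ∪ {j}; (ii) for every i ∈ S with ⟪w, x i⟫ = ⟪w, x j⟫ one has ⟪v², x i⟫ < ⟪v², x j⟫; and (iii) for every i ∉ S ∪ {j} with ⟪w, x i⟫ = ⟪w, x j⟫ one has ⟪v², x i⟫ > ⟪v², x j⟫. Then for every s ∈ (0, s̄), the only index i with ⟪w(s), x i⟫ = ⟪w(s), x j⟫ is i = j, i.e. #{i ∈ Fin N : ⟪w(s), x i⟫ = ⟪w(s), x j⟫} = 1. -/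
open scoped RealInnerProductSpace

/-!
For `i ≠ j` the gap `s ↦ ⟪w(s), x j - x i⟫` (or its negative, for `i ∉ S`) is affine in `s` and
nonnegative at `0` and `s̄`. An affine function that is nonnegative at both ends of an interval and
vanishes inside it is identically zero, so a tie at some `s ∈ (0, s̄)` forces `x i` to tie with
`x j` in both directions `w` and `v²`, which (ii) and (iii) exclude.
-/

theorem eq_zero_of_affine_nonneg_of_eq_zero {a b s t : ℝ} (hs : 0 < s) (hst : s < t)
    (h0 : 0 ≤ a) (ht : 0 ≤ (1 - t) * a + t * b) (heq : (1 - s) * a + s * b = 0) :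
    a = 0 ∧ b = 0 := by
  have hcomb : t * ((1 - s) * a + s * b) = (t - s) * a + s * ((1 - t) * a + t * b) := by ring
  have ha : a = 0 := by nlinarith [mul_nonneg (sub_pos.2 hst).le h0, mul_nonneg hs.le ht]
  subst ha
  refine ⟨rfl, ?_⟩
  simpa [hs.ne'] using heq

section InnerProductSpace

variable {F : Type*} [NormedAddCommGroup F] [InnerProductSpace ℝ F]

theorem inner_combo_left (w v y : F) (s : ℝ) :
    ⟪(1 - s) • w + s • v, y⟫ = (1 - s) * ⟪w, y⟫ + s * ⟪v, y⟫ := by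
  rw [inner_add_left, real_inner_smul_left, real_inner_smul_left]

theorem inner_eq_of_le_of_le_of_eq {w v p q : F} {s t : ℝ} (hs : 0 < s) (hst : s < t)
    (h0 : ⟪w, p⟫ ≤ ⟪w, q⟫)
    (ht : ⟪(1 - t) • w + t • v, p⟫ ≤ ⟪(1 - t) • w + t • v, q⟫)
    (heq : ⟪(1 - s) • w + s • v, p⟫ = ⟪(1 - s) • w + s • v, q⟫) :
    ⟪w, p⟫ = ⟪w, q⟫ ∧ ⟪v, p⟫ = ⟪v, q⟫ := by
  rw [inner_combo_left, inner_combo_left] at ht heq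
  obtain ⟨hw, hv⟩ := eq_zero_of_affine_nonneg_of_eq_zero (a := ⟪w, q⟫ - ⟪w, p⟫)
    (b := ⟪v, q⟫ - ⟪v, p⟫) hs hst (by linarith) (by linarith) (by linarith)
  exact ⟨by linarith, by linarith⟩

end InnerProductSpace

theorem stmt11_general {N : ℕ} (x : Fin N → E2)
    (w v2 : E2)
    (j : Fin N) (S : Finset (Fin N))
    (sBar : ℝ) (hsBar : sBar ∈ Set.Ioc (0 : ℝ) 1)
    (hle : ∀ s ∈ Set.Icc (0 : ℝ) sBar, ∀ i ∈ S,
      ⟪(1 - s) • w + s • v2, x i⟫ ≤ ⟪(1 - s) • w + s • v2, x j⟫)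
    (hge : ∀ s ∈ Set.Icc (0 : ℝ) sBar, ∀ i : Fin N, i ∉ S → i ≠ j →
      ⟪(1 - s) • w + s • v2, x j⟫ ≤ ⟪(1 - s) • w + s • v2, x i⟫)
    (hS2 : ∀ i ∈ S, ⟪w, x i⟫ = ⟪w, x j⟫ → ⟪v2, x i⟫ < ⟪v2, x j⟫)
    (hS3 : ∀ i : Fin N, i ∉ S → i ≠ j → ⟪w, x i⟫ = ⟪w, x j⟫ → ⟪v2, x j⟫ < ⟪v2, x i⟫) :
    ∀ s ∈ Set.Ioo (0 : ℝ) sBar,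
      {i : Fin N | ⟪(1 - s) • w + s • v2, x i⟫ = ⟪(1 - s) • w + s • v2, x j⟫}.ncard = 1 := by
  rintro s ⟨hs0, hssBar⟩
  have h0 : (0 : ℝ) ∈ Set.Icc 0 sBar := ⟨le_rfl, hsBar.1.le⟩
  have hsBar' : sBar ∈ Set.Icc 0 sBar := ⟨hsBar.1.le, le_rfl⟩
  suffices {i : Fin N | ⟪(1 - s) • w + s • v2, x i⟫ = ⟪(1 - s) • w + s • v2, x j⟫} = {j} by
    rw [this, Set.ncard_singleton]
  ext i
  refine ⟨fun htie => ?_, fun hi => by rw [Set.mem_singleton_iff.1 hi]; rfl⟩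
  by_contra hij
  by_cases hiS : i ∈ S
  · have hlow := hle 0 h0 i hiS
    simp only [sub_zero, one_smul, zero_smul, add_zero] at hlow
    obtain ⟨hw, hv⟩ := inner_eq_of_le_of_le_of_eq hs0 hssBar hlow (hle sBar hsBar' i hiS) htie
    exact (hS2 i hiS hw).ne hv
  · have hhigh := hge 0 h0 i hiS hij
    simp only [sub_zero, one_smul, zero_smul, add_zero] at hhigh
    obtain ⟨hw, hv⟩ := inner_eq_of_le_of_le_of_eq hs0 hssBar hhigh
      (hge sBar hsBar' i hiS hij) htie.symm
    exact (hS3 i hiS hij hw.symm).ne hv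

theorem stmt11 {N : ℕ} (hN : 1 ≤ N) (x : Fin N → E2)
    (w v2 : E2) (hv : LinearIndependent ℝ ![w, v2])
    (j : Fin N) (S : Finset (Fin N)) (hjS : j ∉ S)
    (sBar : ℝ) (hsBar : sBar ∈ Set.Ioc (0 : ℝ) 1)
    (hle : ∀ s ∈ Set.Icc (0 : ℝ) sBar, ∀ i ∈ S,
      ⟪(1 - s) • w + s • v2, x i⟫ ≤ ⟪(1 - s) • w + s • v2, x j⟫)
    (hge : ∀ s ∈ Set.Icc (0 : ℝ) sBar, ∀ i : Fin N, i ∉ S → i ≠ j →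
      ⟪(1 - s) • w + s • v2, x j⟫ ≤ ⟪(1 - s) • w + s • v2, x i⟫)
    (hS2 : ∀ i ∈ S, ⟪w, x i⟫ = ⟪w, x j⟫ → ⟪v2, x i⟫ < ⟪v2, x j⟫)
    (hS3 : ∀ i : Fin N, i ∉ S → i ≠ j → ⟪w, x i⟫ = ⟪w, x j⟫ → ⟪v2, x j⟫ < ⟪v2, x i⟫) :
    ∀ s ∈ Set.Ioo (0 : ℝ) sBar,
      {i : Fin N | ⟪(1 - s) • w + s • v2, x i⟫ = ⟪(1 - s) • w + s • v2, x j⟫}.ncard = 1 :=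
  stmt11_general x w v2 j S sBar hsBar hle hge hS2 hS3
end

section
/- (Rotation lemma for the cone distribution function, part (b).) Let x : Fin N → ℝ² (N ≥ 1) be data points, let w, v² ∈ ℝ² be linearly independent, set w(s) := (1−s)·w + s·v², let z ∈ ℝ² and s̄ ∈ (0,1]. Assume that for every s ∈ [0, s̄] and every i ∈ Fin N: if ⟪w, x i⟫ < ⟪w, z⟫, or ⟪w, x i⟫ = ⟪w, z⟫ and ⟪v², x i⟫ < ⟪v², z⟫, then ⟪w(s), x i⟫ ≤ ⟪w(s), z⟫; and if ⟪w, x i⟫ > ⟪w, z⟫, or ⟪w, x i⟫ = ⟪w, z⟫ and ⟪v², x i⟫ > ⟪v², z⟫, then ⟪w(s), x i⟫ ≥ ⟪w(s), z⟫. Then for every s ∈ (0, s̄): #{i : ⟪w(s), x i⟫ ≤ ⟪w(s), z⟫} = #{i : ⟪w, x i⟫ < ⟪w, z⟫} + #{i : ⟪w, x i⟫ = ⟪w, z⟫ and ⟪v², x i⟫ ≤ ⟪v², z⟫}. -/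
open scoped RealInnerProductSpace

theorem stmt12 {N : ℕ} (hN : 1 ≤ N) (x : Fin N → E2)
    (w v2 : E2) (hv : LinearIndependent ℝ ![w, v2])
    (z : E2) (sBar : ℝ) (hsBar : sBar ∈ Set.Ioc (0 : ℝ) 1)
    (hle : ∀ s ∈ Set.Icc (0 : ℝ) sBar, ∀ i : Fin N,
      (⟪w, x i⟫ < ⟪w, z⟫ ∨ (⟪w, x i⟫ = ⟪w, z⟫ ∧ ⟪v2, x i⟫ < ⟪v2, z⟫)) →
        ⟪(1 - s) • w + s • v2, x i⟫ ≤ ⟪(1 - s) • w + s • v2, z⟫)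
    (hge : ∀ s ∈ Set.Icc (0 : ℝ) sBar, ∀ i : Fin N,
      (⟪w, z⟫ < ⟪w, x i⟫ ∨ (⟪w, x i⟫ = ⟪w, z⟫ ∧ ⟪v2, z⟫ < ⟪v2, x i⟫)) →
        ⟪(1 - s) • w + s • v2, z⟫ ≤ ⟪(1 - s) • w + s • v2, x i⟫) :
    ∀ s ∈ Set.Ioo (0 : ℝ) sBar,
      {i : Fin N | ⟪(1 - s) • w + s • v2, x i⟫ ≤ ⟪(1 - s) • w + s • v2, z⟫}.ncard
        = {i : Fin N | ⟪w, x i⟫ < ⟪w, z⟫}.ncard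
          + {i : Fin N | ⟪w, x i⟫ = ⟪w, z⟫ ∧ ⟪v2, x i⟫ ≤ ⟪v2, z⟫}.ncard := by
  intro s hs
  obtain ⟨hs0, hssB⟩ := hs
  have hsmem : s ∈ Set.Icc (0 : ℝ) sBar := ⟨hs0.le, hssB.le⟩
  set s2 : ℝ := (s + sBar) / 2 with hs2def
  have hs2mem : s2 ∈ Set.Icc (0 : ℝ) sBar := by
    constructor <;> [nlinarith [hsBar.1]; nlinarith [hsBar.1]]
  have hss2 : s < s2 := by
    simp only [hs2def]; linarith
  have hset : {i : Fin N | ⟪(1 - s) • w + s • v2, x i⟫ ≤ ⟪(1 - s) • w + s • v2, z⟫}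
      = {i : Fin N | ⟪w, x i⟫ < ⟪w, z⟫}
        ∪ {i : Fin N | ⟪w, x i⟫ = ⟪w, z⟫ ∧ ⟪v2, x i⟫ ≤ ⟪v2, z⟫} := by
    ext i
    simp only [Set.mem_setOf_eq, Set.mem_union, inner_add_left, real_inner_smul_left]
    constructor
    · intro h
      rcases lt_trichotomy (⟪w, x i⟫ : ℝ) ⟪w, z⟫ with hlt | heq | hgt
      · exact Or.inl hlt
      · refine Or.inr ⟨heq, ?_⟩
        nlinarith
      · exfalso
        have h2 := hge s2 hs2mem i (Or.inl hgt)
        simp only [inner_add_left, real_inner_smul_left] at h2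
        nlinarith
    · rintro (hlt | ⟨heq, hle2⟩)
      · have := hle s hsmem i (Or.inl hlt)
        simpa only [inner_add_left, real_inner_smul_left] using this
      · nlinarith
  rw [hset]
  refine Set.ncard_union_eq ?_ (Set.toFinite _) (Set.toFinite _)
  rw [Set.disjoint_left]
  rintro i hi ⟨heq, -⟩
  exact absurd heq (ne_of_lt hi)
end

section
/- Let v¹, v², w ∈ ℝ², ε₁, ε₂ > 0, and set w¹ := w + ε₁·(v¹ − v²) and w² := w − ε₂·(v¹ − v²). Let x̃¹, x̃², ẑ ∈ ℝ² satisfy ⟪w, x̃¹⟫ = ⟪w, x̃²⟫, ⟪v¹, x̃¹⟫ > ⟪v¹, x̃²⟫, ⟪v², x̃²⟫ > ⟪v², x̃¹⟫, ⟪w¹, ẑ − x̃¹⟫ = 0 and ⟪w², ẑ − x̃²⟫ = 0. Then ⟪w, ẑ − x̃¹⟫ > 0 and ⟪w, ẑ − x̃²⟫ > 0; that is, ẑ lies in the open halfspaces x̃¹ + int H⁺(w) and x̃² + int H⁺(w). -/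
open scoped RealInnerProductSpace

section

variable {F : Type*} [NormedAddCommGroup F] [InnerProductSpace ℝ F]

theorem inner_sub_sub_pos_of_lt {v1 v2 x1 x2 : F}
    (hv1 : ⟪v1, x2⟫ < ⟪v1, x1⟫) (hv2 : ⟪v2, x1⟫ < ⟪v2, x2⟫) :
    0 < ⟪v1 - v2, x1 - x2⟫ := by
  simp only [inner_sub_left, inner_sub_right]
  linarith

/-- Eliminating `⟪d, z⟫` between the two tilted hyperplane equations. -/
theorem add_mul_inner_sub_eq_mul_inner_sub {w d x1 x2 z : F} {eps1 eps2 : ℝ}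
    (hw : ⟪w, x1⟫ = ⟪w, x2⟫)
    (hz1 : ⟪w + eps1 • d, z - x1⟫ = 0) (hz2 : ⟪w - eps2 • d, z - x2⟫ = 0) :
    (eps1 + eps2) * ⟪w, z - x1⟫ = eps1 * eps2 * ⟪d, x1 - x2⟫ := by
  simp only [inner_add_left, inner_sub_left, inner_sub_right, real_inner_smul_left] at hz1 hz2 ⊢
  linear_combination eps2 * hz1 + eps1 * hz2 - eps1 * hw

theorem inner_sub_pos_of_tilted_hyperplanes {w d x1 x2 z : F} {eps1 eps2 : ℝ}
    (he1 : 0 < eps1) (he2 : 0 < eps2) (hd : 0 < ⟪d, x1 - x2⟫)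
    (hw : ⟪w, x1⟫ = ⟪w, x2⟫)
    (hz1 : ⟪w + eps1 • d, z - x1⟫ = 0) (hz2 : ⟪w - eps2 • d, z - x2⟫ = 0) :
    0 < ⟪w, z - x1⟫ := by
  have hprod : 0 < (eps1 + eps2) * ⟪w, z - x1⟫ :=
    add_mul_inner_sub_eq_mul_inner_sub hw hz1 hz2 ▸ by positivity
  exact pos_of_mul_pos_right hprod (by positivity)

end

theorem stmt13 (v1 v2 w : E2) (eps1 eps2 : ℝ) (he1 : 0 < eps1) (he2 : 0 < eps2)
    (x1 x2 zHat : E2)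
    (hw : ⟪w, x1⟫ = ⟪w, x2⟫)
    (hv1 : ⟪v1, x2⟫ < ⟪v1, x1⟫)
    (hv2 : ⟪v2, x1⟫ < ⟪v2, x2⟫)
    (hz1 : ⟪w + eps1 • (v1 - v2), zHat - x1⟫ = 0)
    (hz2 : ⟪w - eps2 • (v1 - v2), zHat - x2⟫ = 0) :
    0 < ⟪w, zHat - x1⟫ ∧ 0 < ⟪w, zHat - x2⟫ := by
  have hpos := inner_sub_pos_of_tilted_hyperplanes he1 he2
    (inner_sub_sub_pos_of_lt hv1 hv2) hw hz1 hz2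
  have hsame : ⟪w, zHat - x2⟫ = ⟪w, zHat - x1⟫ := by
    simp only [inner_sub_right, hw]
  exact ⟨hpos, hsame ▸ hpos⟩
end

section
/- (Redundancy of an intermediate normal direction.) Let v¹, v², w ∈ ℝ², ε₁, ε₂ > 0, and set w¹ := w + ε₁·(v¹ − v²) and w² := w − ε₂·(v¹ − v²). Let x̃¹, x̃², ẑ ∈ ℝ² satisfy ⟪w, x̃¹⟫ = ⟪w, x̃²⟫, ⟪v¹, x̃¹⟫ > ⟪v¹, x̃²⟫, ⟪v², x̃²⟫ > ⟪v², x̃¹⟫, ⟪w¹, ẑ − x̃¹⟫ = 0 and ⟪w², ẑ − x̃²⟫ = 0. Then every z ∈ ℝ² with ⟪w¹, z − x̃¹⟫ ≥ 0 and ⟪w², z − x̃²⟫ ≥ 0 satisfies the strict inequality ⟪w, z − x̃¹⟫ > 0; in particular, (x̃¹ + H⁺(w¹)) ∩ (x̃² + H⁺(w²)) is strictly contained in x̃¹ + H⁺(w) = x̃² + H⁺(w). -/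
open scoped RealInnerProductSpace

theorem stmt14 (v1 v2 w : E2) (eps1 eps2 : ℝ) (he1 : 0 < eps1) (he2 : 0 < eps2)
    (x1 x2 zHat : E2)
    (hw : ⟪w, x1⟫ = ⟪w, x2⟫)
    (hv1 : ⟪v1, x2⟫ < ⟪v1, x1⟫)
    (hv2 : ⟪v2, x1⟫ < ⟪v2, x2⟫)
    (hz1 : ⟪w + eps1 • (v1 - v2), zHat - x1⟫ = 0)
    (hz2 : ⟪w - eps2 • (v1 - v2), zHat - x2⟫ = 0) :
    (∀ z : E2, 0 ≤ ⟪w + eps1 • (v1 - v2), z - x1⟫ → 0 ≤ ⟪w - eps2 • (v1 - v2), z - x2⟫ →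
      0 < ⟪w, z - x1⟫) ∧
    ({z : E2 | 0 ≤ ⟪w + eps1 • (v1 - v2), z - x1⟫} ∩ {z : E2 | 0 ≤ ⟪w - eps2 • (v1 - v2), z - x2⟫}
      ⊂ {z : E2 | 0 ≤ ⟪w, z - x1⟫}) ∧
    {z : E2 | 0 ≤ ⟪w, z - x1⟫} = {z : E2 | 0 ≤ ⟪w, z - x2⟫} := by
  have key : ∀ z : E2, 0 ≤ ⟪w + eps1 • (v1 - v2), z - x1⟫ →
      0 ≤ ⟪w - eps2 • (v1 - v2), z - x2⟫ → 0 < ⟪w, z - x1⟫ := by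
    intro z h1 h2
    simp only [inner_add_left, inner_sub_left, inner_sub_right, inner_smul_left,
      starRingEnd_apply, star_trivial] at h1 h2 hw ⊢
    nlinarith [mul_pos he1 he2, mul_le_mul_of_nonneg_left h1 he2.le,
      mul_le_mul_of_nonneg_left h2 he1.le]
  refine ⟨key, ⟨fun z hz => (key z hz.1 hz.2).le, fun hsub => ?_⟩, ?_⟩
  · have hx1 : x1 ∈ {z : E2 | 0 ≤ ⟪w, z - x1⟫} := by simp
    have := hsub hx1
    have := key x1 this.1 this.2
    simp at this
  · ext z
    simp only [Set.mem_setOf_eq, inner_sub_right, hw]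
end

section
/- Let x : Fin N → ℝ² (N ≥ 1) be data points, v¹, v² ∈ ℝ² linearly independent, C := {z : ⟪v¹,z⟫ ≥ 0 ∧ ⟪v²,z⟫ ≥ 0}, B⁺ := segment [v¹, v²], and p ∈ (0,1]. If the data set is totally ordered by the cone order, i.e. for all i, j ∈ Fin N either x i − x j ∈ C or x j − x i ∈ C, then there exists an index j ∈ Fin N such that Q⁻_C(p) = x j + C; that is, the lower C-quantile is a single data point plus the cone. -/
/-!
Order the data by the linear functional `⟪v¹ + v², ·⟫`. Total comparability in the cone order
makes this order agree with the cone order on the data, and every `w ∈ B⁺` is monotone for the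
cone order. Let `x j` be the `K`-th smallest data point in this order. If `z ∈ x j + C`, then for
every `w ∈ B⁺` the `K` smallest points lie `w`-below `z`, so `cdepth z ≥ K`. Otherwise
`⟪vⁱ, z⟫ < ⟪vⁱ, x j⟫` for `i = 1` or `2`, and only points strictly smaller than `x j` can be
`vⁱ`-below `z`; there are fewer than `K` of them.
-/

open scoped RealInnerProductSpace

/-- `f j` is the `K`-th smallest value of `f`, counted with multiplicity. -/
theorem exists_ncard_lt_le_ncard_le {ι α : Type*} [Fintype ι] [LinearOrder α] (f : ι → α)
    {K : ℕ} (hK : 1 ≤ K) (hKι : K ≤ Fintype.card ι) :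
    ∃ j, {k | f k < f j}.ncard < K ∧ K ≤ {k | f k ≤ f j}.ncard := by
  have : Nonempty ι := Fintype.card_pos_iff.mp (by omega)
  obtain ⟨top, htop⟩ := Finite.exists_max f
  obtain ⟨j, hjK, hjmin⟩ := Set.exists_min_image {i | K ≤ {k | f k ≤ f i}.ncard} f
    (Set.toFinite _) ⟨top, by simpa [htop] using hKι⟩
  refine ⟨j, not_le.mp fun hlow ↦ ?_, hjK⟩
  obtain ⟨m, hm, hmmax⟩ := Set.exists_max_image {k | f k < f j} f (Set.toFinite _)
    (Set.nonempty_of_ncard_ne_zero (by omega))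
  have hmK : K ≤ {k | f k ≤ f m}.ncard :=
    hlow.trans (Set.ncard_le_ncard (fun k hk ↦ hmmax k hk) (Set.toFinite _))
  exact (hjmin m hmK).not_gt hm

section Cone

variable {E : Type*} [NormedAddCommGroup E] [InnerProductSpace ℝ E]

def cone (v1 v2 : E) : Set E := {u | 0 ≤ ⟪v1, u⟫ ∧ 0 ≤ ⟪v2, u⟫}

variable {v1 v2 : E}

theorem inner_nonneg_of_mem_segment_of_mem_cone {w u : E} (hw : w ∈ segment ℝ v1 v2)
    (hu : u ∈ cone v1 v2) : 0 ≤ ⟪w, u⟫ := by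
  obtain ⟨a, b, ha, hb, -, rfl⟩ := hw
  rw [inner_add_left, real_inner_smul_left, real_inner_smul_left]
  exact add_nonneg (mul_nonneg ha hu.1) (mul_nonneg hb hu.2)

theorem inner_le_inner_of_mem_segment_of_sub_mem_cone {w a b : E} (hw : w ∈ segment ℝ v1 v2)
    (hab : b - a ∈ cone v1 v2) : ⟪w, a⟫ ≤ ⟪w, b⟫ := by
  have := inner_nonneg_of_mem_segment_of_mem_cone hw hab
  rw [inner_sub_right] at this
  linarith

theorem sub_mem_cone_of_inner_add_le {a b : E}
    (hcomp : a - b ∈ cone v1 v2 ∨ b - a ∈ cone v1 v2)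
    (hle : ⟪v1 + v2, a⟫ ≤ ⟪v1 + v2, b⟫) : b - a ∈ cone v1 v2 := by
  rcases hcomp with hba | hab
  · simp only [cone, Set.mem_ofPred_eq, inner_sub_right, inner_add_left] at *
    constructor <;> linarith
  · exact hab

end Cone

section Depth

variable {N : ℕ} {x : Fin N → E2} {v1 v2 w z : E2}

theorem cdepth_le_wdepth (hw : w ∈ segment ℝ v1 v2) : cdepth x v1 v2 z ≤ wdepth x w z :=
  Nat.sInf_le ⟨w, hw, rfl⟩

theorem le_cdepth {K : ℕ} (h : ∀ w ∈ segment ℝ v1 v2, K ≤ wdepth x w z) :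
    K ≤ cdepth x v1 v2 z :=
  le_csInf ⟨_, v1, left_mem_segment ℝ v1 v2, rfl⟩ (by rintro _ ⟨w, hw, rfl⟩; exact h w hw)

theorem ncard_inner_add_le_le_wdepth
    (htot : ∀ i j, x i - x j ∈ cone v1 v2 ∨ x j - x i ∈ cone v1 v2) {j : Fin N} (hw : w ∈ segment ℝ v1 v2)
    (hz : z - x j ∈ cone v1 v2) :
    {k | ⟪v1 + v2, x k⟫ ≤ ⟪v1 + v2, x j⟫}.ncard ≤ wdepth x w z :=
  Set.ncard_le_ncard (fun k hk ↦
    (inner_le_inner_of_mem_segment_of_sub_mem_cone hw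
      (sub_mem_cone_of_inner_add_le (htot k j) hk)).trans
    (inner_le_inner_of_mem_segment_of_sub_mem_cone hw hz)) (Set.toFinite _)

theorem wdepth_le_ncard_inner_add_lt
    (htot : ∀ i j, x i - x j ∈ cone v1 v2 ∨ x j - x i ∈ cone v1 v2) {j : Fin N} (hw : w ∈ segment ℝ v1 v2)
    (hz : ⟪w, z⟫ < ⟪w, x j⟫) :
    wdepth x w z ≤ {k | ⟪v1 + v2, x k⟫ < ⟪v1 + v2, x j⟫}.ncard :=
  Set.ncard_le_ncard (fun k hk ↦ not_le.mp fun hjk ↦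
    (lt_of_le_of_lt hk hz).not_ge <| inner_le_inner_of_mem_segment_of_sub_mem_cone hw
      (sub_mem_cone_of_inner_add_le (htot j k) hjk)) (Set.toFinite _)

end Depth

theorem stmt16_general {N : ℕ} (hN : 1 ≤ N) (x : Fin N → E2) (v1 v2 : E2)
    (p : ℝ) (hp : p ∈ Set.Ioc (0 : ℝ) 1)
    (htot : ∀ i j : Fin N,
      x i - x j ∈ {u : E2 | 0 ≤ ⟪v1, u⟫ ∧ 0 ≤ ⟪v2, u⟫} ∨
      x j - x i ∈ {u : E2 | 0 ≤ ⟪v1, u⟫ ∧ 0 ≤ ⟪v2, u⟫}) :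
    ∃ j : Fin N,
      {z : E2 | ⌈(N : ℝ) * p⌉₊ ≤ cdepth x v1 v2 z}
        = {z : E2 | z - x j ∈ {u : E2 | 0 ≤ ⟪v1, u⟫ ∧ 0 ≤ ⟪v2, u⟫}} := by
  change ∀ i j, x i - x j ∈ cone v1 v2 ∨ x j - x i ∈ cone v1 v2 at htot
  have hNpos : (0 : ℝ) < N := by exact_mod_cast hN
  have hK : 1 ≤ ⌈(N : ℝ) * p⌉₊ := Nat.one_le_ceil_iff.mpr (mul_pos hNpos hp.1)
  have hKN : ⌈(N : ℝ) * p⌉₊ ≤ Fintype.card (Fin N) := by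
    rw [Fintype.card_fin, Nat.ceil_le]
    exact mul_le_of_le_one_right hNpos.le hp.2
  obtain ⟨j, hlow, hhigh⟩ := exists_ncard_lt_le_ncard_le (fun i ↦ ⟪v1 + v2, x i⟫) hK hKN
  refine ⟨j, Set.ext fun z ↦ ⟨fun hz ↦ ?_, fun hz ↦ ?_⟩⟩
  · by_contra hout
    obtain ⟨w, hw, hwz⟩ : ∃ w ∈ segment ℝ v1 v2, ⟪w, z⟫ < ⟪w, x j⟫ := by
      simp only [Set.mem_ofPred_eq, not_and_or, not_le, inner_sub_right, sub_neg] at hout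
      exact hout.elim (⟨v1, left_mem_segment ℝ v1 v2, ·⟩) (⟨v2, right_mem_segment ℝ v1 v2, ·⟩)
    exact (((cdepth_le_wdepth hw).trans (wdepth_le_ncard_inner_add_lt htot hw hwz)).trans_lt
      hlow).not_ge hz
  · exact le_cdepth fun w hw ↦ hhigh.trans (ncard_inner_add_le_le_wdepth htot hw hz)

theorem stmt16 {N : ℕ} (hN : 1 ≤ N) (x : Fin N → E2) (v1 v2 : E2)
    (hv : LinearIndependent ℝ ![v1, v2]) (p : ℝ) (hp : p ∈ Set.Ioc (0 : ℝ) 1)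
    (htot : ∀ i j : Fin N,
      x i - x j ∈ {u : E2 | 0 ≤ ⟪v1, u⟫ ∧ 0 ≤ ⟪v2, u⟫} ∨
      x j - x i ∈ {u : E2 | 0 ≤ ⟪v1, u⟫ ∧ 0 ≤ ⟪v2, u⟫}) :
    ∃ j : Fin N,
      {z : E2 | ⌈(N : ℝ) * p⌉₊ ≤ cdepth x v1 v2 z}
        = {z : E2 | z - x j ∈ {u : E2 | 0 ≤ ⟪v1, u⟫ ∧ 0 ≤ ⟪v2, u⟫}} :=
  stmt16_general hN x v1 v2 p hp htot
end

section
/- Let x : Fin N → ℝ² (N ≥ 1) be data points, v¹, v² ∈ ℝ² linearly independent, C := {z : ⟪v¹,z⟫ ≥ 0 ∧ ⟪v²,z⟫ ≥ 0}, and B⁺ := segment [v¹, v²]. If p ∈ (0, 1/N] (so that ⌈N·p⌉ = 1), then Q⁻_C(p) equals the convex hull of the data points plus the cone: Q⁻_C(p) = convexHull(range x) + C. -/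
open scoped RealInnerProductSpace Pointwise

private lemma aux_div_mul (A α : ℝ) (h : α ≠ 0) : (A / -α) * α = -A := by
  rw [div_mul_eq_mul_div, div_neg, mul_div_assoc, div_self h, mul_one]

private lemma aux_combo (a b r s : ℝ) (h : a + b ≠ 0) :
    (a + b) * (a / (a + b) * r + b / (a + b) * s) = a * r + b * s := by
  field_simp

set_option maxHeartbeats 1000000 in
theorem stmt17 {N : ℕ} (hN : 1 ≤ N) (x : Fin N → E2) (v1 v2 : E2)
    (hv : LinearIndependent ℝ ![v1, v2]) (p : ℝ) (hp0 : 0 < p) (hp1 : p ≤ 1 / N) :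
    {z : E2 | ⌈(N : ℝ) * p⌉₊ ≤ cdepth x v1 v2 z}
      = convexHull ℝ (Set.range x) + {u : E2 | 0 ≤ ⟪v1, u⟫ ∧ 0 ≤ ⟪v2, u⟫} := by
  have hNpos : (0:ℝ) < N := by exact_mod_cast hN
  set C : Set E2 := {u : E2 | 0 ≤ ⟪v1, u⟫ ∧ 0 ≤ ⟪v2, u⟫} with hCdef
  -- The ceiling is 1.
  have hK : ⌈(N:ℝ) * p⌉₊ = 1 := by
    have h1 : (N:ℝ) * p ≤ 1 := by
      have := mul_le_mul_of_nonneg_left hp1 hNpos.le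
      calc (N:ℝ) * p ≤ N * (1/N) := this
        _ = 1 := by field_simp
    have h2 : (0:ℝ) < (N:ℝ) * p := mul_pos hNpos hp0
    have hle : ⌈(N:ℝ) * p⌉₊ ≤ 1 := Nat.ceil_le.mpr (by simpa using h1)
    have hge : 1 ≤ ⌈(N:ℝ) * p⌉₊ := Nat.one_le_ceil_iff.mpr h2
    omega
  -- depth ≥ 1 iff each w in the segment sees some data point below z.
  have hmem : ∀ z : E2, (1 ≤ cdepth x v1 v2 z ↔
      ∀ w ∈ segment ℝ v1 v2, ∃ i, ⟪w, x i⟫ ≤ ⟪w, z⟫) := by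
    intro z
    constructor
    · intro h w hw
      have hle : cdepth x v1 v2 z ≤ wdepth x w z := Nat.sInf_le ⟨w, hw, rfl⟩
      have h1 : 1 ≤ wdepth x w z := le_trans h hle
      have hne : {i : Fin N | ⟪w, x i⟫ ≤ ⟪w, z⟫}.Nonempty :=
        (Set.ncard_pos (Set.toFinite _)).mp h1
      exact hne
    · intro h
      rw [Nat.one_le_iff_ne_zero]
      intro h0
      rcases Nat.sInf_eq_zero.mp h0 with h0 | h0
      · rcases h0 with ⟨w, hw, hw0⟩
        have hne : {i : Fin N | ⟪w, x i⟫ ≤ ⟪w, z⟫}.Nonempty := h w hw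
        have hpos := (Set.ncard_pos (Set.toFinite _)).mpr hne
        simp only [wdepth] at hw0
        omega
      · have h1 : v1 ∈ segment ℝ v1 v2 := left_mem_segment ℝ v1 v2
        have h2 : wdepth x v1 z ∈ ((fun w => wdepth x w z) '' segment ℝ v1 v2) :=
          Set.mem_image_of_mem _ h1
        rw [h0] at h2
        exact h2
  have hlin : ∀ v : E2, IsLinearMap ℝ (fun u : E2 => ⟪v, u⟫) := fun v =>
    ⟨fun a b => inner_add_right _ _ _, fun c a => real_inner_smul_right _ _ _⟩
  rw [hK]
  ext z
  rw [Set.mem_setOf_eq, hmem z]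
  constructor
  · -- hard direction
    intro hz
    by_contra hns
    have hCconv : Convex ℝ C :=
      (convex_halfSpace_ge (hlin v1) 0).inter (convex_halfSpace_ge (hlin v2) 0)
    have hcont : ∀ v : E2, Continuous fun u : E2 => ⟪v, u⟫ := fun v =>
      Continuous.inner continuous_const continuous_id
    have hCclosed : IsClosed C := by
      have h1 : IsClosed {u : E2 | 0 ≤ ⟪v1, u⟫} := isClosed_le continuous_const (hcont v1)
      have h2 : IsClosed {u : E2 | 0 ≤ ⟪v2, u⟫} := isClosed_le continuous_const (hcont v2)
      exact h1.inter h2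
    have hsclosed : IsClosed (convexHull ℝ (Set.range x) + C) :=
      IsClosed.add_left_of_isCompact hCclosed ((Set.finite_range x).isCompact_convexHull (𝕜 := ℝ))
    have hsconv : Convex ℝ (convexHull ℝ (Set.range x) + C) :=
      (convex_convexHull ℝ _).add hCconv
    obtain ⟨f, u0, hfz, hfs⟩ := geometric_hahn_banach_point_closed hsconv hsclosed hns
    obtain ⟨w, hfw⟩ : ∃ w : E2, ∀ y : E2, ⟪w, y⟫ = f y :=
      ⟨(InnerProductSpace.toDual ℝ E2).symm f, fun y => InnerProductSpace.toDual_symm_apply⟩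
    have h0C : (0:E2) ∈ C := ⟨by simp, by simp⟩
    have hxmem : ∀ i, x i ∈ convexHull ℝ (Set.range x) + C := by
      intro i
      have h1 : x i ∈ convexHull ℝ (Set.range x) :=
        subset_convexHull ℝ (Set.range x) (Set.mem_range_self i)
      have h2 := Set.add_mem_add h1 h0C
      simpa using h2
    set i0 : Fin N := ⟨0, hN⟩
    have hzlt : ⟪w, z⟫ < u0 := by rw [hfw]; exact hfz
    have hxgt : ∀ i, u0 < ⟪w, x i⟫ := fun i => by rw [hfw]; exact hfs _ (hxmem i)
    -- w is nonnegative on C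
    have hwC : ∀ u ∈ C, 0 ≤ ⟪w, u⟫ := by
      intro u hu
      by_contra hneg
      push_neg at hneg
      have hane : ⟪w, u⟫ ≠ 0 := ne_of_lt hneg
      set t : ℝ := (⟪w, x i0⟫ - u0 + 1) / (-⟪w, u⟫) with htdef
      have htpos : 0 < t := div_pos (by have := hxgt i0; linarith) (by linarith)
      have htu : t • u ∈ C :=
        ⟨by rw [real_inner_smul_right]; exact mul_nonneg htpos.le hu.1,
         by rw [real_inner_smul_right]; exact mul_nonneg htpos.le hu.2⟩
      have hx0 : x i0 ∈ convexHull ℝ (Set.range x) :=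
        subset_convexHull ℝ (Set.range x) (Set.mem_range_self i0)
      have hmem2 : x i0 + t • u ∈ convexHull ℝ (Set.range x) + C :=
        Set.add_mem_add hx0 htu
      have hlt := hfs _ hmem2
      rw [← hfw, inner_add_right, real_inner_smul_right] at hlt
      have hcalc : t * ⟪w, u⟫ = -(⟪w, x i0⟫ - u0 + 1) := by
        rw [htdef]
        exact aux_div_mul _ _ hane
      rw [hcalc] at hlt
      linarith
    -- express w in the basis v1, v2
    have hcard : Fintype.card (Fin 2) = Module.finrank ℝ E2 := by simp
    obtain ⟨a, b, hw_eq⟩ : ∃ a b : ℝ, a • v1 + b • v2 = w := by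
      set B := basisOfLinearIndependentOfCardEqFinrank hv hcard with hBdef
      have hB0 : B 0 = v1 := by
        rw [hBdef, coe_basisOfLinearIndependentOfCardEqFinrank]; rfl
      have hB1 : B 1 = v2 := by
        rw [hBdef, coe_basisOfLinearIndependentOfCardEqFinrank]; rfl
      refine ⟨B.repr w 0, B.repr w 1, ?_⟩
      have hsum := B.sum_repr w
      rwa [Fin.sum_univ_two, hB0, hB1] at hsum
    -- linear independence facts
    have hv2ne : v2 ≠ 0 := by
      have := (linearIndependent_fin2.mp hv).1
      simpa using this
    have hnv : ∀ r : ℝ, r • v2 ≠ v1 := by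
      intro r
      have := (linearIndependent_fin2.mp hv).2 r
      simpa using this
    have hv1ne : v1 ≠ 0 := fun h => hnv 0 (by simp [h])
    have hv1sq : ⟪v1, v1⟫ ≠ 0 := inner_self_ne_zero.mpr hv1ne
    have hv2sq : ⟪v2, v2⟫ ≠ 0 := inner_self_ne_zero.mpr hv2ne
    -- dual vector u1 : orthogonal to v2, positive against v1
    set u1 : E2 := v1 - (⟪v2, v1⟫ / ⟪v2, v2⟫) • v2 with hu1def
    have h21 : ⟪v2, u1⟫ = 0 := by
      rw [hu1def, inner_sub_right, real_inner_smul_right, div_mul_cancel₀ _ hv2sq, sub_self]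
    have hkey1 : ⟪v1, u1⟫ - (⟪v2, v1⟫ / ⟪v2, v2⟫) * ⟪v2, u1⟫ = ⟪u1, u1⟫ := by
      rw [← real_inner_smul_left, ← inner_sub_left, ← hu1def]
    have h11 : ⟪v1, u1⟫ = ⟪u1, u1⟫ := by rw [h21] at hkey1; linarith
    have hu1ne : u1 ≠ 0 := by
      intro h
      rw [hu1def, sub_eq_zero] at h
      exact hnv _ h.symm
    have hu1pos : (0:ℝ) < ⟪u1, u1⟫ :=
      lt_of_le_of_ne real_inner_self_nonneg (Ne.symm (inner_self_ne_zero.mpr hu1ne))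
    have hu1C : u1 ∈ C := ⟨by rw [h11]; exact hu1pos.le, le_of_eq h21.symm⟩
    have ha : 0 ≤ a := by
      have h := hwC u1 hu1C
      rw [← hw_eq, inner_add_left, real_inner_smul_left, real_inner_smul_left, h21, h11] at h
      nlinarith
    -- dual vector u2 : orthogonal to v1, positive against v2
    set u2 : E2 := v2 - (⟪v1, v2⟫ / ⟪v1, v1⟫) • v1 with hu2def
    have h12 : ⟪v1, u2⟫ = 0 := by
      rw [hu2def, inner_sub_right, real_inner_smul_right, div_mul_cancel₀ _ hv1sq, sub_self]
    have hkey2 : ⟪v2, u2⟫ - (⟪v1, v2⟫ / ⟪v1, v1⟫) * ⟪v1, u2⟫ = ⟪u2, u2⟫ := by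
      rw [← real_inner_smul_left, ← inner_sub_left, ← hu2def]
    have h22 : ⟪v2, u2⟫ = ⟪u2, u2⟫ := by rw [h12] at hkey2; linarith
    have hu2ne : u2 ≠ 0 := by
      intro h
      rw [hu2def, sub_eq_zero] at h
      obtain ⟨c, hc⟩ : ∃ c : ℝ, v2 = c • v1 := ⟨_, h⟩
      have hcne : c ≠ 0 := by
        intro hc0
        rw [hc0, zero_smul] at hc
        exact hv2ne hc
      apply hnv c⁻¹
      rw [hc, smul_smul, inv_mul_cancel₀ hcne, one_smul]
    have hu2pos : (0:ℝ) < ⟪u2, u2⟫ :=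
      lt_of_le_of_ne real_inner_self_nonneg (Ne.symm (inner_self_ne_zero.mpr hu2ne))
    have hu2C : u2 ∈ C := ⟨le_of_eq h12.symm, by rw [h22]; exact hu2pos.le⟩
    have hb : 0 ≤ b := by
      have h := hwC u2 hu2C
      rw [← hw_eq, inner_add_left, real_inner_smul_left, real_inner_smul_left, h12, h22] at h
      nlinarith
    -- w ≠ 0 hence a + b > 0
    have hwne : w ≠ 0 := by
      intro h
      have h1 := hxgt i0
      rw [h, inner_zero_left] at h1 hzlt
      linarith
    have hab : 0 < a + b := by
      by_contra hcon
      push_neg at hcon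
      have ha0 : a = 0 := le_antisymm (by linarith) ha
      have hb0 : b = 0 := le_antisymm (by linarith) hb
      apply hwne
      rw [← hw_eq, ha0, hb0, zero_smul, zero_smul, add_zero]
    have habne : a + b ≠ 0 := ne_of_gt hab
    -- normalized direction lies in the segment
    have hseg : (a/(a+b)) • v1 + (b/(a+b)) • v2 ∈ segment ℝ v1 v2 :=
      ⟨a/(a+b), b/(a+b), div_nonneg ha hab.le, div_nonneg hb hab.le,
        by field_simp, rfl⟩
    obtain ⟨i, hi⟩ := hz _ hseg
    have hkey : ∀ y : E2, (a+b) * ⟪(a/(a+b)) • v1 + (b/(a+b)) • v2, y⟫ = ⟪w, y⟫ := by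
      intro y
      rw [inner_add_left, real_inner_smul_left, real_inner_smul_left, ← hw_eq,
        inner_add_left, real_inner_smul_left, real_inner_smul_left]
      exact aux_combo _ _ _ _ habne
    have hmul := mul_le_mul_of_nonneg_left hi hab.le
    rw [hkey, hkey] at hmul
    have := hxgt i
    linarith
  · -- easy direction
    rw [Set.mem_add]
    rintro ⟨y, hy, u, hu, rfl⟩ w hw
    obtain ⟨sa, sb, hsa, hsb, hs1, rfl⟩ := hw
    set w := sa • v1 + sb • v2 with hwdef
    have huw : 0 ≤ ⟪w, u⟫ := by
      rw [hwdef, inner_add_left, real_inner_smul_left, real_inner_smul_left]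
      exact add_nonneg (mul_nonneg hsa hu.1) (mul_nonneg hsb hu.2)
    have hNE : Nonempty (Fin N) := ⟨⟨0, hN⟩⟩
    have hne : (Finset.univ : Finset (Fin N)).Nonempty := Finset.univ_nonempty
    obtain ⟨i, _, hi⟩ := Finset.exists_mem_eq_inf' hne (fun i => ⟪w, x i⟫)
    refine ⟨i, ?_⟩
    have hyi : Finset.univ.inf' hne (fun i => ⟪w, x i⟫) ≤ ⟪w, y⟫ := by
      have hconv : Convex ℝ {y : E2 | Finset.univ.inf' hne (fun i => ⟪w, x i⟫) ≤ ⟪w, y⟫} :=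
        convex_halfSpace_ge (hlin w) _
      have hsub : Set.range x ⊆ {y : E2 | Finset.univ.inf' hne (fun i => ⟪w, x i⟫) ≤ ⟪w, y⟫} := by
        rintro _ ⟨j, rfl⟩
        exact Finset.inf'_le (fun i => ⟪w, x i⟫) (Finset.mem_univ j)
      exact convexHull_min hsub hconv hy
    rw [hi] at hyi
    calc ⟪w, x i⟫ ≤ ⟪w, y⟫ := hyi
      _ ≤ ⟪w, y + u⟫ := by rw [inner_add_right]; linarith
end

section
/- (Affine invariance of the empirical lower cone distribution function.) Let x : Fin N → ℝ² (N ≥ 1) be data points, let C ⊆ ℝ² be a convex cone, and for a cone D let D⁺ := {u ∈ ℝ² : ⟪u, d⟫ ≥ 0 for all d ∈ D}. For an invertible linear map A : ℝ² → ℝ² and every z ∈ ℝ², the infimum over w ∈ C⁺ \ {0} of #{i ∈ Fin N : ⟪w, x i⟫ ≤ ⟪w, z⟫} equals the infimum over u ∈ (A '' C)⁺ \ {0} of #{i ∈ Fin N : ⟪u, A (x i)⟫ ≤ ⟪u, A z⟫}; that is, the cone location depth of z with respect to the data x and cone C equals the cone location depth of A z with respect to the transformed data A ∘ x and cone A ''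 C. -/
open scoped RealInnerProductSpace

theorem stmt18 {N : ℕ} (hN : 1 ≤ N) (x : Fin N → E2)
    (C : ConvexCone ℝ E2) (A : E2 ≃ₗ[ℝ] E2) (z : E2) :
    sInf {n : ℕ | ∃ w : E2, w ≠ 0 ∧ (∀ c ∈ (C : Set E2), 0 ≤ ⟪w, c⟫) ∧
        n = {i : Fin N | ⟪w, x i⟫ ≤ ⟪w, z⟫}.ncard}
      = sInf {n : ℕ | ∃ u : E2, u ≠ 0 ∧ (∀ d ∈ A '' (C : Set E2), 0 ≤ ⟪u, d⟫) ∧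
        n = {i : Fin N | ⟪u, A (x i)⟫ ≤ ⟪u, A z⟫}.ncard} := by
  congr 1
  ext n
  constructor
  · rintro ⟨w, hw, hwC, rfl⟩
    have key : ∀ v : E2, ⟪LinearMap.adjoint (A.symm : E2 →ₗ[ℝ] E2) w, A v⟫ = ⟪w, v⟫ := by
      intro v; rw [LinearMap.adjoint_inner_left]; simp
    refine ⟨LinearMap.adjoint (A.symm : E2 →ₗ[ℝ] E2) w, ?_, ?_, ?_⟩
    · intro h
      apply hw
      have h2 := key w
      rw [h, inner_zero_left] at h2
      exact inner_self_eq_zero.mp h2.symm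
    · rintro d ⟨c, hc, rfl⟩
      rw [key c]; exact hwC c hc
    · congr 1
      ext i
      simp [key]
  · rintro ⟨u, hu, huC, rfl⟩
    have key : ∀ v : E2, ⟪LinearMap.adjoint (A : E2 →ₗ[ℝ] E2) u, v⟫ = ⟪u, A v⟫ := by
      intro v; rw [LinearMap.adjoint_inner_left]; rfl
    refine ⟨LinearMap.adjoint (A : E2 →ₗ[ℝ] E2) u, ?_, ?_, ?_⟩
    · intro h
      apply hu
      have h2 := key (A.symm u)
      rw [h, inner_zero_left, LinearEquiv.apply_symm_apply] at h2
      exact inner_self_eq_zero.mp h2.symm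
    · intro c hc
      rw [key c]; exact huC (A c) ⟨c, hc, rfl⟩
    · congr 1
      ext i
      simp [key]
end
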